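/- arXiv:2604.05511 — 4 statements merged into one kernel-verified Lean document; each statement's English description precedes it below -/
import Mathlib

section
/- Let q1, q2, r be real numbers with q1 > 0, r > 0 and q2 ≥ 0. There exist T0 > 0, C > 0 and μ > 0, depending only on q1, q2, r, such that for every T ≥ T0 and every four times continuously differentiable function y : ℝ → ℝ satisfying r·y''''(t) − q2·y''(t) + q1·y(t) = 0 for all t ∈ [0,T] and the boundary bounds |y(0)| ≤ 1, |y'(0)| ≤ 1, |y(T)| ≤ 1, |y'(T)| ≤ 1, one has |y(t)| + |y'(t)| + |y''(t)| ≤ C·( e^{−μ·t} + e^{−μ·(T−t)} ) for all t ∈ [0,T]. -/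
/-!
The characteristic polynomial `r λ⁴ - q₂ λ² + q₁` factors as `r (λ² + bλ + c) (λ² - bλ + c)` with
`c = √(q₁ / r)` and `b = √(2c + q₂ / r)`. Hence `u = y'' - b y' + c y` solves the damped equation
`u'' + b u' + c u = 0` and decays exponentially forward in time, while `v = y'' + b y' + c y` solves
`v'' - b v' + c v = 0` and decays backward from `T`; the decay of a damped oscillator follows from
the Lyapunov function `c x² + ε x x' + x'²`. The bounds on `y, y'` at the end points couple `u(0)`
to `v(0)` and `v(T)` to `u(T)`. As `v(0)` and `u(T)` are exponentially small compared with `v(T)`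
and `u(0)`, for large `T` this coupling bounds `u(0)` and `v(T)` uniformly. Finally `y, y', y''`
are linear combinations of `u, u', v, v'`.
-/

open Real Set Filter Topology

theorem le_mul_exp_of_hasDerivAt_le_mul {f f' : ℝ → ℝ} {K a b : ℝ}
    (hf : ∀ t ∈ Icc a b, HasDerivAt f (f' t) t) (hbound : ∀ t ∈ Icc a b, f' t ≤ K * f t) :
    ∀ t ∈ Icc a b, f t ≤ f a * exp (K * (t - a)) := by
  intro t ht
  have := le_gronwallBound_of_liminf_deriv_right_le (f' := f') (ε := 0)
    (fun s hs => (hf s hs).continuousAt.continuousWithinAt)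
    (fun s hs r hr => (hf s (Ico_subset_Icc_self hs)).hasDerivWithinAt.liminf_right_slope_le hr)
    le_rfl (fun s hs => by simpa using hbound s (Ico_subset_Icc_self hs)) t ht
  rwa [gronwallBound_ε0] at this

theorem exists_pos_mul_le_quadratic {α β γ : ℝ} (hα : 0 < α) (hdisc : β ^ 2 < 4 * α * γ) :
    ∃ m > 0, ∀ x y : ℝ, m * (x ^ 2 + y ^ 2) ≤ α * x ^ 2 + β * (x * y) + γ * y ^ 2 := by
  have hγ : 0 < γ := by nlinarith [sq_nonneg β]
  set m := (4 * α * γ - β ^ 2) / (4 * (α + γ))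
  have hm : m * (4 * (α + γ)) = 4 * α * γ - β ^ 2 := div_mul_cancel₀ _ (by positivity)
  have hm0 : 0 < m := div_pos (by linarith) (by positivity)
  have hαm : 0 < α - m := by nlinarith [sq_nonneg β]
  refine ⟨m, hm0, fun x y => ?_⟩
  have key : 4 * (α - m) * (α * x ^ 2 + β * (x * y) + γ * y ^ 2 - m * (x ^ 2 + y ^ 2))
      = (2 * (α - m) * x + β * y) ^ 2 + 4 * m ^ 2 * y ^ 2 := by
    linear_combination (-(y ^ 2)) * hm
  nlinarith [sq_nonneg (2 * (α - m) * x + β * y), sq_nonneg (m * y)]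

theorem exists_pos_forall_ge_mul_exp_neg_le (A : ℝ) {σ ε : ℝ} (hσ : 0 < σ) (hε : 0 < ε) :
    ∃ T₀ > 0, ∀ T ≥ T₀, A * exp (-σ * T) ≤ ε := by
  have hlim : Tendsto (fun T => A * exp (-σ * T)) atTop (𝓝 0) := by
    simpa using (tendsto_exp_neg_atTop_nhds_zero.comp
      (tendsto_id.const_mul_atTop hσ)).const_mul A
  obtain ⟨T₁, hT₁⟩ := (hlim.eventually (ge_mem_nhds hε)).exists_forall_of_atTop
  exact ⟨max T₁ 1, by positivity, fun T hT => hT₁ T (le_of_max_le_left hT)⟩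

theorem bootstrap_le_two_mul {X Y X' Y' A ε : ℝ} (hX : 0 ≤ X) (hY : 0 ≤ Y) (hA : 0 ≤ A)
    (hXY : X ≤ A * (Y' + 1)) (hYX : Y ≤ A * (X' + 1)) (hX' : X' ≤ ε * X) (hY' : Y' ≤ ε * Y)
    (hAε : A * ε ≤ 1 / 2) : X ≤ 2 * A ∧ Y ≤ 2 * A := by
  have h1 : X ≤ A + Y / 2 := by nlinarith [mul_le_mul_of_nonneg_left hY' hA]
  have h2 : Y ≤ A + X / 2 := by nlinarith [mul_le_mul_of_nonneg_left hX' hA]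
  constructor <;> linarith

def IsDampedSolution (b c T : ℝ) (x p : ℝ → ℝ) : Prop :=
  ∀ t ∈ Icc 0 T, HasDerivAt x (p t) t ∧ HasDerivAt p (-(b * p t + c * x t)) t

def dampedEnergy (c ε x p : ℝ) : ℝ := c * x ^ 2 + ε * (x * p) + p ^ 2

namespace IsDampedSolution

variable {b c T : ℝ} {x p : ℝ → ℝ}

theorem reflect (h : IsDampedSolution (-b) c T x p) :
    IsDampedSolution b c T (fun s => x (T - s)) (fun s => -p (T - s)) := by
  intro t ht
  obtain ⟨hx, hp⟩ := h (T - t) ⟨by linarith [ht.2], by linarith [ht.1]⟩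
  exact ⟨hx.comp_const_sub T t, (hp.comp_const_sub T t).neg.congr_deriv (by ring)⟩

theorem hasDerivAt_dampedEnergy (h : IsDampedSolution b c T x p) (ε : ℝ) {t : ℝ}
    (ht : t ∈ Icc 0 T) :
    HasDerivAt (fun s => dampedEnergy c ε (x s) (p s))
      (-(ε * c * x t ^ 2 + ε * b * (x t * p t) + (2 * b - ε) * p t ^ 2)) t := by
  obtain ⟨hx, hp⟩ := h t ht
  exact ((((hx.pow 2).const_mul c).add ((hx.mul hp).const_mul ε)).add (hp.pow 2)).congr_deriv
    (by push_cast; ring)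

theorem dampedEnergy_le (h : IsDampedSolution b c T x p) {ε κ : ℝ}
    (hdiss : ∀ x p : ℝ, κ * dampedEnergy c ε x p
      ≤ ε * c * x ^ 2 + ε * b * (x * p) + (2 * b - ε) * p ^ 2) :
    ∀ t ∈ Icc 0 T, dampedEnergy c ε (x t) (p t)
      ≤ dampedEnergy c ε (x 0) (p 0) * exp (-κ * t) := by
  intro t ht
  simpa using le_mul_exp_of_hasDerivAt_le_mul (K := -κ)
    (fun s hs => h.hasDerivAt_dampedEnergy ε hs) (fun s _ => by linarith [hdiss (x s) (p s)]) t ht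

theorem abs_add_abs_le_of_reflect {K σ : ℝ}
    (hdecay : ∀ T x p, IsDampedSolution b c T x p →
      ∀ t ∈ Icc 0 T, |x t| + |p t| ≤ K * (|x 0| + |p 0|) * exp (-σ * t))
    (h : IsDampedSolution (-b) c T x p) :
    ∀ t ∈ Icc 0 T, |x t| + |p t| ≤ K * (|x T| + |p T|) * exp (-σ * (T - t)) := by
  intro t ht
  simpa using hdecay T _ _ h.reflect (T - t) ⟨by linarith [ht.2], by linarith [ht.1]⟩

end IsDampedSolution

theorem exists_dampedEnergy_lyapunov {b c : ℝ} (hb : 0 < b) (hc : 0 < c) :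
    ∃ ε m M κ : ℝ, 0 < m ∧ 0 < M ∧ 0 < κ ∧
      (∀ x p, m * (x ^ 2 + p ^ 2) ≤ dampedEnergy c ε x p) ∧
      (∀ x p, dampedEnergy c ε x p ≤ M * (x ^ 2 + p ^ 2)) ∧
      ∀ x p, κ * dampedEnergy c ε x p ≤ ε * c * x ^ 2 + ε * b * (x * p) + (2 * b - ε) * p ^ 2 := by
  -- this `ε` makes both the energy and its dissipation rate positive definite
  obtain ⟨ε, hε, hεb⟩ : ∃ ε > 0, ε * (b ^ 2 + 4 * c) = 2 * b * c :=
    ⟨_, by positivity, div_mul_cancel₀ _ (by positivity)⟩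
  obtain ⟨m, hm, hE⟩ := exists_pos_mul_le_quadratic (β := ε) (γ := 1) hc (by
    have : ε ^ 2 * (b ^ 2 + 4 * c) ^ 2 = 4 * b ^ 2 * c ^ 2 := by rw [← mul_pow, hεb]; ring
    nlinarith [mul_pos hb hc, mul_pos (mul_pos hb hb) hc])
  obtain ⟨m', hm', hQ⟩ := exists_pos_mul_le_quadratic (α := ε * c) (β := ε * b)
    (γ := 2 * b - ε) (by positivity) (by nlinarith [mul_pos hε (mul_pos hb hc)])
  have hEM : ∀ x p, dampedEnergy c ε x p ≤ (c + ε + 1) * (x ^ 2 + p ^ 2) := fun x p => by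
    unfold dampedEnergy; nlinarith [sq_nonneg (x - p), sq_nonneg p]
  refine ⟨ε, m, c + ε + 1, m' / (c + ε + 1), hm, by positivity, by positivity,
    fun x p => by simpa [dampedEnergy] using hE x p, hEM, fun x p => ?_⟩
  calc m' / (c + ε + 1) * dampedEnergy c ε x p
      ≤ m' / (c + ε + 1) * ((c + ε + 1) * (x ^ 2 + p ^ 2)) := by gcongr; exact hEM x p
    _ = m' * (x ^ 2 + p ^ 2) := by field_simp
    _ ≤ _ := hQ x p

theorem exists_forall_isDampedSolution_decay {b c : ℝ} (hb : 0 < b) (hc : 0 < c) :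
    ∃ K σ : ℝ, 0 < K ∧ 0 < σ ∧ ∀ T x p, IsDampedSolution b c T x p →
      ∀ t ∈ Icc 0 T, |x t| + |p t| ≤ K * (|x 0| + |p 0|) * exp (-σ * t) := by
  obtain ⟨ε, m, M, κ, hm, hM, hκ, hmE, hEM, hdiss⟩ := exists_dampedEnergy_lyapunov hb hc
  refine ⟨2 * M / m + 1, κ / 2, by positivity, by positivity, fun T x p h t ht => ?_⟩
  have hsq : (|x t| + |p t|) ^ 2 ≤ 2 * M / m * (|x 0| + |p 0|) ^ 2 * exp (-κ * t) := by
    have hx₀ : x 0 ^ 2 + p 0 ^ 2 ≤ (|x 0| + |p 0|) ^ 2 := by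
      nlinarith [sq_abs (x 0), sq_abs (p 0), abs_nonneg (x 0), abs_nonneg (p 0)]
    have hmx : m * (x t ^ 2 + p t ^ 2) ≤ M * (|x 0| + |p 0|) ^ 2 * exp (-κ * t) :=
      calc m * (x t ^ 2 + p t ^ 2) ≤ dampedEnergy c ε (x t) (p t) := hmE _ _
        _ ≤ dampedEnergy c ε (x 0) (p 0) * exp (-κ * t) := h.dampedEnergy_le hdiss t ht
        _ ≤ M * (|x 0| + |p 0|) ^ 2 * exp (-κ * t) := by
          gcongr; exact (hEM _ _).trans (by gcongr)
    calc (|x t| + |p t|) ^ 2 ≤ 2 * (x t ^ 2 + p t ^ 2) := by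
          simpa only [sq_abs] using add_sq_le (a := |x t|) (b := |p t|)
      _ ≤ 2 * (M * (|x 0| + |p 0|) ^ 2 * exp (-κ * t) / m) := by
        gcongr; rw [le_div_iff₀ hm]; linarith
      _ = _ := by ring
  have hexp : exp (-κ * t) = exp (-(κ / 2) * t) ^ 2 := by rw [← exp_nat_mul]; ring_nf
  rw [← pow_le_pow_iff_left₀ (by positivity) (by positivity) two_ne_zero]
  refine hsq.trans ?_
  rw [hexp, mul_pow, mul_pow]
  gcongr
  nlinarith [sq_nonneg (2 * M / m)]

noncomputable def quadOp (β c : ℝ) (y : ℝ → ℝ) (k : ℕ) : ℝ → ℝ :=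
  fun t => iteratedDeriv (k + 2) y t + β * iteratedDeriv (k + 1) y t + c * iteratedDeriv k y t

theorem hasDerivAt_iteratedDeriv_of_contDiff {n : WithTop ℕ∞} {y : ℝ → ℝ} (hy : ContDiff ℝ n y)
    {j : ℕ} (hj : (j : WithTop ℕ∞) < n) (t : ℝ) :
    HasDerivAt (iteratedDeriv j y) (iteratedDeriv (j + 1) y t) t := by
  rw [iteratedDeriv_succ]
  exact (hy.differentiable_iteratedDeriv j hj).differentiableAt.hasDerivAt

theorem hasDerivAt_quadOp {n : WithTop ℕ∞} {y : ℝ → ℝ} (hy : ContDiff ℝ n y) (β c : ℝ) {k : ℕ}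
    (hk : ((k + 2 : ℕ) : WithTop ℕ∞) < n) (t : ℝ) :
    HasDerivAt (quadOp β c y k) (quadOp β c y (k + 1) t) t := by
  have hj : ∀ j ≤ k + 2, HasDerivAt (iteratedDeriv j y) (iteratedDeriv (j + 1) y t) t :=
    fun j hj => hasDerivAt_iteratedDeriv_of_contDiff hy ((Nat.cast_le.2 hj).trans_lt hk) t
  exact ((hj _ le_rfl).add ((hj _ (by omega)).const_mul β)).add ((hj _ (by omega)).const_mul c)

theorem isDampedSolution_quadOp {β c T : ℝ} {y : ℝ → ℝ} (hy : ContDiff ℝ 4 y)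
    (hode : ∀ t ∈ Icc 0 T,
      iteratedDeriv 4 y t + (2 * c - β ^ 2) * iteratedDeriv 2 y t + c ^ 2 * y t = 0) :
    IsDampedSolution (-β) c T (quadOp β c y 0) (quadOp β c y 1) := by
  intro t ht
  refine ⟨hasDerivAt_quadOp hy β c (by norm_num) t,
    (hasDerivAt_quadOp hy β c (k := 1) (by norm_num) t).congr_deriv ?_⟩
  simp only [quadOp, iteratedDeriv_zero]
  linear_combination hode t ht

theorem abs_quadOp_neg_add_abs_le (β c : ℝ) (y : ℝ → ℝ) (t : ℝ) (h0 : |y t| ≤ 1)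
    (h1 : |deriv y t| ≤ 1) :
    |quadOp (-β) c y 0 t| + |quadOp (-β) c y 1 t|
      ≤ (1 + 2 * |β| + 2 * β ^ 2 + 2 * |β * c|)
        * (|quadOp β c y 0 t| + |quadOp β c y 1 t| + 1) := by
  simp only [quadOp, zero_add, Nat.reduceAdd, iteratedDeriv_zero, iteratedDeriv_one]
  generalize y t = y₀ at *
  generalize deriv y t = y₁ at *
  generalize iteratedDeriv 2 y t = y₂
  generalize iteratedDeriv 3 y t = y₃
  set a := y₂ + β * y₁ + c * y₀
  set a' := y₃ + β * y₂ + c * y₁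
  have h₁ : |β * y₁| ≤ |β| := by rw [abs_mul]; nlinarith [abs_nonneg β]
  have h₂ : |β ^ 2 * y₁| ≤ β ^ 2 := by rw [abs_mul, abs_sq]; nlinarith [sq_nonneg β]
  have h₃ : |β * c * y₀| ≤ |β * c| := by rw [abs_mul]; nlinarith [abs_nonneg (β * c)]
  have hd : |y₂ + -β * y₁ + c * y₀| ≤ |a| + 2 * |β| := by
    rw [show y₂ + -β * y₁ + c * y₀ = a - 2 * (β * y₁) by ring]
    have := abs_sub a (2 * (β * y₁))
    rw [abs_mul, abs_two] at this
    linarith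
  -- `y₂ = a - β y₁ - c y₀` eliminates the second derivative from the coupling
  have hd' : |y₃ + -β * y₂ + c * y₁| ≤ |a'| + 2 * |β| * |a| + 2 * β ^ 2 + 2 * |β * c| := by
    rw [show y₃ + -β * y₂ + c * y₁
      = a' - 2 * (β * a) + 2 * (β ^ 2 * y₁) + 2 * (β * c * y₀) by ring]
    calc _ ≤ |a' - 2 * (β * a)| + |2 * (β ^ 2 * y₁)| + |2 * (β * c * y₀)| := abs_add_three _ _ _
      _ ≤ |a'| + |2 * (β * a)| + |2 * (β ^ 2 * y₁)| + |2 * (β * c * y₀)| := by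
        gcongr; exact abs_sub _ _
      _ ≤ _ := by simp only [abs_mul, abs_two, abs_sq] at h₂ h₃ ⊢; nlinarith
  have hS : 0 ≤ |a| + |a'| := by positivity
  nlinarith [mul_nonneg (abs_nonneg β) hS, mul_nonneg (sq_nonneg β) hS,
    mul_nonneg (abs_nonneg (β * c)) hS, abs_nonneg a', mul_nonneg (abs_nonneg β) (abs_nonneg a')]

theorem abs_add_abs_add_abs_le_quadOp {b c : ℝ} (hb : 0 < b) (hc : 0 < c) (y : ℝ → ℝ) (t : ℝ) :
    |y t| + |deriv y t| + |iteratedDeriv 2 y t|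
      ≤ (1 + b + c) / (b * c) * (|quadOp (-b) c y 0 t| + |quadOp (-b) c y 1 t|
        + (|quadOp b c y 0 t| + |quadOp b c y 1 t|)) := by
  simp only [quadOp, zero_add, Nat.reduceAdd, iteratedDeriv_zero, iteratedDeriv_one]
  generalize y t = y₀
  generalize deriv y t = y₁
  generalize iteratedDeriv 2 y t = y₂
  generalize iteratedDeriv 3 y t = y₃
  set d := y₂ + -b * y₁ + c * y₀
  set d' := y₃ + -b * y₂ + c * y₁
  set a := y₂ + b * y₁ + c * y₀
  set a' := y₃ + b * y₂ + c * y₁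
  have h2b : |2 * b| = 2 * b := abs_of_pos (by positivity)
  have e₁ : 2 * b * |y₁| ≤ |a| + |d| := by
    have := abs_sub a d
    rwa [show a - d = 2 * b * y₁ by ring, abs_mul, h2b] at this
  have e₂ : 2 * b * |y₂| ≤ |a'| + |d'| := by
    have := abs_sub a' d'
    rwa [show a' - d' = 2 * b * y₂ by ring, abs_mul, h2b] at this
  have e₀ : 2 * c * |y₀| ≤ |a| + |d| + 2 * |y₂| := by
    have h := abs_sub (a + d) (2 * y₂)
    rw [show a + d - 2 * y₂ = 2 * c * y₀ by ring] at h
    simp only [abs_mul, abs_two, abs_of_pos hc] at h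
    linarith [abs_add_le a d]
  rw [div_mul_eq_mul_div, le_div_iff₀ (by positivity)]
  nlinarith [abs_nonneg a, abs_nonneg a', abs_nonneg d, abs_nonneg d', abs_nonneg y₂,
    mul_le_mul_of_nonneg_left e₁ hc.le, mul_le_mul_of_nonneg_left e₂ hc.le,
    mul_le_mul_of_nonneg_left e₀ hb.le, mul_le_mul_of_nonneg_left e₂ hb.le]

theorem exists_turnpike_bound {b c : ℝ} (hb : 0 < b) (hc : 0 < c) :
    ∃ T₀ > (0 : ℝ), ∃ C > (0 : ℝ), ∃ μ > (0 : ℝ), ∀ T ≥ T₀, ∀ y : ℝ → ℝ, ContDiff ℝ 4 y →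
      (∀ t ∈ Icc 0 T,
        iteratedDeriv 4 y t + (2 * c - b ^ 2) * iteratedDeriv 2 y t + c ^ 2 * y t = 0) →
      |y 0| ≤ 1 → |deriv y 0| ≤ 1 → |y T| ≤ 1 → |deriv y T| ≤ 1 →
      ∀ t ∈ Icc 0 T, |y t| + |deriv y t| + |iteratedDeriv 2 y t|
        ≤ C * (exp (-μ * t) + exp (-μ * (T - t))) := by
  obtain ⟨K, σ, hK, hσ, hdecay⟩ := exists_forall_isDampedSolution_decay hb hc
  set A := 1 + 2 * |b| + 2 * b ^ 2 + 2 * |b * c|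
  obtain ⟨T₀, hT₀, hsmall⟩ := exists_pos_forall_ge_mul_exp_neg_le (A * K) hσ one_half_pos
  refine ⟨T₀, hT₀, (1 + b + c) / (b * c) * (K * (2 * A)), by positivity, σ, hσ, ?_⟩
  intro T hT y hy hode hy₀ hy₀' hyT hyT' t ht
  have hT0 : 0 ≤ T := hT₀.le.trans hT
  have hu := isDampedSolution_quadOp (β := -b) (c := c) hy fun s hs => by
    rw [neg_sq]; exact hode s hs
  rw [neg_neg] at hu
  have hv := isDampedSolution_quadOp (β := b) hy hode
  set U := fun s => |quadOp (-b) c y 0 s| + |quadOp (-b) c y 1 s|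
  set V := fun s => |quadOp b c y 0 s| + |quadOp b c y 1 s|
  obtain ⟨hU₀, hVT⟩ : U 0 ≤ 2 * A ∧ V T ≤ 2 * A :=
    bootstrap_le_two_mul (ε := K * exp (-σ * T)) (by positivity) (by positivity) (by positivity)
      (abs_quadOp_neg_add_abs_le b c y 0 hy₀ hy₀')
      (by simpa [A] using abs_quadOp_neg_add_abs_le (-b) c y T hyT hyT')
      (by simpa [mul_right_comm] using hdecay T _ _ hu T ⟨hT0, le_rfl⟩)
      (by simpa [mul_right_comm] using hv.abs_add_abs_le_of_reflect hdecay 0 ⟨le_rfl, hT0⟩)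
      (by rw [← mul_assoc]; exact hsmall T hT)
  calc |y t| + |deriv y t| + |iteratedDeriv 2 y t| ≤ (1 + b + c) / (b * c) * (U t + V t) :=
        abs_add_abs_add_abs_le_quadOp hb hc y t
    _ ≤ (1 + b + c) / (b * c)
          * (K * (2 * A) * exp (-σ * t) + K * (2 * A) * exp (-σ * (T - t))) := by
        gcongr
        · exact (hdecay T _ _ hu t ht).trans (by gcongr)
        · exact (hv.abs_add_abs_le_of_reflect hdecay t ht).trans (by gcongr)
    _ = _ := by ring

/-- exponential turnpike estimate for stationary trajectories of the
double-integrator LQ problem in the regular case: any `C⁴` solution of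
`r·y'''' − q2·y'' + q1·y = 0` on `[0,T]` with boundary data bounded by `1` satisfies
`|y(t)| + |y'(t)| + |y''(t)| ≤ C·(e^{−μt} + e^{−μ(T−t)})` on `[0,T]`, uniformly in `T ≥ T0`. -/
theorem stmt3 (q1 q2 r : ℝ) (hq1 : 0 < q1) (hr : 0 < r) (hq2 : 0 ≤ q2) :
    ∃ T0 > (0:ℝ), ∃ C > (0:ℝ), ∃ μ > (0:ℝ), ∀ T ≥ T0, ∀ y : ℝ → ℝ,
      ContDiff ℝ 4 y →
      (∀ t ∈ Set.Icc (0:ℝ) T,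
        r * iteratedDeriv 4 y t - q2 * iteratedDeriv 2 y t + q1 * y t = 0) →
      |y 0| ≤ 1 → |deriv y 0| ≤ 1 → |y T| ≤ 1 → |deriv y T| ≤ 1 →
      ∀ t ∈ Set.Icc (0:ℝ) T,
        |y t| + |deriv y t| + |iteratedDeriv 2 y t|
          ≤ C * (Real.exp (-μ * t) + Real.exp (-μ * (T - t))) := by
  obtain ⟨c, hc, hc2⟩ : ∃ c : ℝ, 0 < c ∧ c ^ 2 = q1 / r :=
    ⟨√(q1 / r), by positivity, sq_sqrt (by positivity)⟩
  obtain ⟨b, hb, hb2⟩ : ∃ b : ℝ, 0 < b ∧ b ^ 2 = 2 * c + q2 / r :=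
    ⟨√(2 * c + q2 / r), by positivity, sq_sqrt (by positivity)⟩
  obtain ⟨T₀, hT₀, C, hC, μ, hμ, hbound⟩ := exists_turnpike_bound hb hc
  refine ⟨T₀, hT₀, C, hC, μ, hμ, fun T hT y hy hode => hbound T hT y hy fun t ht => ?_⟩
  rw [hc2, hb2]
  field_simp
  linear_combination hode t ht
end

section
/- Let q1, q2, r be real numbers with q1 > 0, r > 0 and q2 ≥ 0. There exists T0 > 0 such that for every T ≥ T0 and all real numbers y0, v0, yT, vT, there exists a unique four times continuously differentiable function y : ℝ → ℝ satisfying r·y''''(t) − q2·y''(t) + q1·y(t) = 0 for all t ∈ [0,T] together with the boundary conditions y(0) = y0, y'(0) = v0, y(T) = yT, y'(T) = vT. -/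
open Real Set

/-!
Uniqueness holds for every `T > 0` by an energy estimate: if `w` solves the equation with zero
boundary data, then `w · (r w'''' - q2 w'' + q1 w) = F' + r w''² + q2 w'² + q1 w²` with
`F = r (w w''' - w' w'') - q2 w w'`, and `F` vanishes at both ends, so the nonnegative energy
`r w''² + q2 w'² + q1 w²` has zero integral and `w = 0`.

For existence, the solutions on `ℝ` are `t ↦ (exp (t A) c)₀` with `A` the companion matrix and
`c ∈ ℝ⁴`. The boundary data `(y 0, y' 0, y T, y' T)` depend linearly on `c`; uniqueness makes this
map `ℝ⁴ → ℝ⁴` injective, hence surjective.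
-/

open intervalIntegral

section IteratedDeriv

variable {𝕜 : Type*} [NontriviallyNormedField 𝕜] {F : Type*} [NormedAddCommGroup F]
  [NormedSpace 𝕜 F]

theorem ContDiff.hasDerivAt_iteratedDeriv {n : ℕ} {f : 𝕜 → F} (hf : ContDiff 𝕜 n f) {k : ℕ}
    (hk : k < n) (x : 𝕜) : HasDerivAt (iteratedDeriv k f) (iteratedDeriv (k + 1) f x) x := by
  rw [iteratedDeriv_succ]
  exact (hf.differentiable_iteratedDeriv k (mod_cast hk) x).hasDerivAt

end IteratedDeriv

theorem eqOn_zero_of_integral_eq_zero_of_nonneg {f : ℝ → ℝ} {a b : ℝ} (hab : a < b)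
    (hf : ContinuousOn f (Icc a b)) (hf₀ : ∀ x ∈ Icc a b, 0 ≤ f x)
    (h : ∫ x in a..b, f x = 0) : EqOn f 0 (Icc a b) := by
  intro x hx
  by_contra hfx
  have := integral_pos hab hf (fun y hy => hf₀ y (Ioc_subset_Icc_self hy))
    ⟨x, hx, (hf₀ x hx).lt_of_ne' hfx⟩
  exact this.ne' h

theorem hasDerivAt_energyFlux {w : ℝ → ℝ} (hw : ContDiff ℝ 4 w) (q2 r t : ℝ) :
    HasDerivAt
      (fun t => r * (w t * iteratedDeriv 3 w t - iteratedDeriv 1 w t * iteratedDeriv 2 w t)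
        - q2 * (w t * iteratedDeriv 1 w t))
      (w t * (r * iteratedDeriv 4 w t - q2 * iteratedDeriv 2 w t)
        - (r * iteratedDeriv 2 w t ^ 2 + q2 * iteratedDeriv 1 w t ^ 2)) t := by
  have d0 : HasDerivAt w (iteratedDeriv 1 w t) t := by
    simpa using hw.hasDerivAt_iteratedDeriv (n := 4) (k := 0) (by norm_num) t
  have d1 : HasDerivAt (iteratedDeriv 1 w) (iteratedDeriv 2 w t) t :=
    hw.hasDerivAt_iteratedDeriv (n := 4) (by norm_num) t
  have d2 : HasDerivAt (iteratedDeriv 2 w) (iteratedDeriv 3 w t) t :=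
    hw.hasDerivAt_iteratedDeriv (n := 4) (by norm_num) t
  have d3 : HasDerivAt (iteratedDeriv 3 w) (iteratedDeriv 4 w t) t :=
    hw.hasDerivAt_iteratedDeriv (n := 4) (by norm_num) t
  exact ((((d0.mul d3).sub (d1.mul d2)).const_mul r).sub ((d0.mul d1).const_mul q2)).congr_deriv
    (by ring)

theorem eqOn_zero_of_ode_of_boundary_eq_zero {q1 q2 r a b : ℝ} (hq1 : 0 < q1) (hr : 0 ≤ r)
    (hq2 : 0 ≤ q2) (hab : a < b) {w : ℝ → ℝ} (hw : ContDiff ℝ 4 w)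
    (hode : ∀ t ∈ Icc a b, r * iteratedDeriv 4 w t - q2 * iteratedDeriv 2 w t + q1 * w t = 0)
    (ha : w a = 0) (ha' : deriv w a = 0) (hb : w b = 0) (hb' : deriv w b = 0) :
    EqOn w 0 (Icc a b) := by
  set energy := fun t => r * iteratedDeriv 2 w t ^ 2 + q2 * iteratedDeriv 1 w t ^ 2 + q1 * w t ^ 2
  have henergy : Continuous energy := by
    have := hw.continuous
    have := hw.continuous_iteratedDeriv 1 (by norm_num)
    have := hw.continuous_iteratedDeriv 2 (by norm_num)
    fun_prop
  have hderiv (t : ℝ) (ht : t ∈ uIcc a b) :=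
    (hasDerivAt_energyFlux hw q2 r t).congr_deriv (show _ = -energy t by
      rw [uIcc_of_le hab.le] at ht
      linear_combination (w t) * hode t ht)
  have hzero : ∫ t in a..b, energy t = 0 := by
    have := integral_eq_sub_of_hasDerivAt hderiv (henergy.intervalIntegrable a b).neg
    rw [iteratedDeriv_one] at this
    simpa [integral_neg, ha, ha', hb, hb'] using this
  intro t ht
  have hEt : energy t = 0 := eqOn_zero_of_integral_eq_zero_of_nonneg hab henergy.continuousOn
    (fun t _ => by positivity) hzero ht
  have : q1 * w t ^ 2 = 0 := by
    simp only [energy] at hEt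
    nlinarith [mul_nonneg hr (sq_nonneg (iteratedDeriv 2 w t)),
      mul_nonneg hq2 (sq_nonneg (iteratedDeriv 1 w t)), mul_nonneg hq1.le (sq_nonneg (w t))]
  simpa [hq1.ne'] using this

section LinearSystem

variable {E : Type*} [NormedAddCommGroup E] [NormedSpace ℝ E]
  {F : Type*} [NormedAddCommGroup F] [NormedSpace ℝ F]

theorem iteratedDeriv_clm_apply_of_hasDerivAt {A : E →L[ℝ] E} {f : ℝ → E}
    (hf : ∀ t, HasDerivAt f (A (f t)) t) (ℓ : E →L[ℝ] F) (k : ℕ) :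
    iteratedDeriv k (fun t => ℓ (f t)) = fun t => ℓ ((A ^ k) (f t)) := by
  induction k with
  | zero => simp
  | succ k ih =>
    ext t
    rw [iteratedDeriv_succ, ih]
    exact ((ℓ.comp (A ^ k)).hasFDerivAt.comp_hasDerivAt t (hf t)).deriv.trans (by simp [pow_succ])

theorem contDiff_clm_apply_of_hasDerivAt {A : E →L[ℝ] E} {f : ℝ → E}
    (hf : ∀ t, HasDerivAt f (A (f t)) t) (ℓ : E →L[ℝ] F) {n : ℕ∞} :
    ContDiff ℝ n (fun t => ℓ (f t)) :=
  contDiff_of_differentiable_iteratedDeriv fun m _ => by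
    rw [iteratedDeriv_clm_apply_of_hasDerivAt hf]
    exact fun t => ((ℓ.comp (A ^ m)).hasFDerivAt.comp_hasDerivAt t (hf t)).differentiableAt

variable [CompleteSpace E]

theorem hasDerivAt_exp_smul_apply (A : E →L[ℝ] E) (c : E) (t : ℝ) :
    HasDerivAt (fun t : ℝ => NormedSpace.exp (t • A) c) (A (NormedSpace.exp (t • A) c)) t :=
  ((hasDerivAt_exp_smul_const' A t).clm_apply (hasDerivAt_const t c)).congr_deriv (by simp)

theorem exp_smul_apply_eq_zero_iff (A : E →L[ℝ] E) (t : ℝ) {c : E} :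
    NormedSpace.exp (t • A) c = 0 ↔ c = 0 := by
  refine ⟨fun h => ?_, fun h => by rw [h, map_zero]⟩
  -- `exp_add_of_commute` is stated for `ℚ`-algebras
  let _ := NormedAlgebra.restrictScalars ℚ ℝ (E →L[ℝ] E)
  have hinv : NormedSpace.exp (-t • A) * NormedSpace.exp (t • A) = 1 := by
    rw [← NormedSpace.exp_add_of_commute ((Commute.refl A).smul_left _ |>.smul_right _),
      neg_smul, neg_add_cancel, NormedSpace.exp_zero]
  simpa [h] using (congrArg (· c) hinv).symm

end LinearSystem

section Companion

variable (q1 q2 : ℝ)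

/-- Acts on the state `(y, y', y'', y''')` of a solution of `r y'''' - q2 y'' + q1 y = 0`. -/
noncomputable def companion (r : ℝ) : (Fin 4 → ℝ) →L[ℝ] (Fin 4 → ℝ) :=
  LinearMap.toContinuousLinearMap
    (Matrix.toLin' !![0, 1, 0, 0; 0, 0, 1, 0; 0, 0, 0, 1; -(q1 / r), 0, q2 / r, 0])

theorem companion_apply (r : ℝ) (v : Fin 4 → ℝ) :
    companion q1 q2 r v = ![v 1, v 2, v 3, q2 / r * v 2 - q1 / r * v 0] := by
  ext i
  fin_cases i <;> simp [companion, Matrix.mulVec, dotProduct, Fin.sum_univ_four]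
  ring

theorem companion_pow_apply_zero (r : ℝ) (k : Fin 4) (v : Fin 4 → ℝ) :
    (companion q1 q2 r ^ (k : ℕ)) v 0 = v k := by
  fin_cases k <;> simp [pow_succ, companion_apply]

theorem companion_pow_four_apply_zero {r : ℝ} (hr : r ≠ 0) (v : Fin 4 → ℝ) :
    r * (companion q1 q2 r ^ 4) v 0 - q2 * (companion q1 q2 r ^ 2) v 0 + q1 * v 0 = 0 := by
  simp [pow_succ, companion_apply]
  field_simp
  ring

end Companion

section BoundaryValueProblem

variable {q1 q2 r : ℝ}

noncomputable def companionSolution (q1 q2 r : ℝ) (c : Fin 4 → ℝ) (t : ℝ) : ℝ :=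
  NormedSpace.exp (t • companion q1 q2 r) c 0

theorem iteratedDeriv_companionSolution (c : Fin 4 → ℝ) (k : ℕ) (t : ℝ) :
    iteratedDeriv k (companionSolution q1 q2 r c) t
      = (companion q1 q2 r ^ k) (NormedSpace.exp (t • companion q1 q2 r) c) 0 :=
  congrFun (iteratedDeriv_clm_apply_of_hasDerivAt (hasDerivAt_exp_smul_apply _ c)
    (ContinuousLinearMap.proj 0) k) t

theorem contDiff_companionSolution (c : Fin 4 → ℝ) {n : ℕ∞} :
    ContDiff ℝ n (companionSolution q1 q2 r c) :=
  contDiff_clm_apply_of_hasDerivAt (hasDerivAt_exp_smul_apply _ c) (ContinuousLinearMap.proj 0)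

theorem deriv_companionSolution (c : Fin 4 → ℝ) (t : ℝ) :
    deriv (companionSolution q1 q2 r c) t = NormedSpace.exp (t • companion q1 q2 r) c 1 := by
  rw [← iteratedDeriv_one, iteratedDeriv_companionSolution]
  exact companion_pow_apply_zero q1 q2 r 1 _

theorem companionSolution_ode (hr : r ≠ 0) (c : Fin 4 → ℝ) (t : ℝ) :
    r * iteratedDeriv 4 (companionSolution q1 q2 r c) t
      - q2 * iteratedDeriv 2 (companionSolution q1 q2 r c) t
      + q1 * companionSolution q1 q2 r c t = 0 := by
  simp only [iteratedDeriv_companionSolution]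
  exact companion_pow_four_apply_zero q1 q2 hr _

noncomputable def boundaryMap (q1 q2 r T : ℝ) : (Fin 4 → ℝ) →ₗ[ℝ] (Fin 4 → ℝ) where
  toFun c := ![companionSolution q1 q2 r c 0, deriv (companionSolution q1 q2 r c) 0,
    companionSolution q1 q2 r c T, deriv (companionSolution q1 q2 r c) T]
  map_add' c d := by
    ext i
    fin_cases i <;> simp [companionSolution, deriv_companionSolution]
  map_smul' a c := by
    ext i
    fin_cases i <;> simp [companionSolution, deriv_companionSolution]

theorem boundaryMap_injective (hq1 : 0 < q1) (hr : 0 < r) (hq2 : 0 ≤ q2) {T : ℝ} (hT : 0 < T) :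
    Function.Injective (boundaryMap q1 q2 r T) := by
  rw [← LinearMap.ker_eq_bot, LinearMap.ker_eq_bot']
  intro c hc
  have hzero : EqOn (companionSolution q1 q2 r c) 0 (Icc 0 T) :=
    eqOn_zero_of_ode_of_boundary_eq_zero hq1 hr.le hq2 hT (contDiff_companionSolution c)
      (fun t _ => companionSolution_ode hr.ne' c t) (congrFun hc 0) (congrFun hc 1)
      (congrFun hc 2) (congrFun hc 3)
  have hstate : NormedSpace.exp ((T / 2) • companion q1 q2 r) c = 0 := by
    ext k
    have := (hzero.mono Ioo_subset_Icc_self).iteratedDeriv_of_isOpen isOpen_Ioo k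
      (show T / 2 ∈ Ioo 0 T by constructor <;> linarith)
    rwa [iteratedDeriv_companionSolution, companion_pow_apply_zero, iteratedDeriv_const_zero] at this
  exact (exp_smul_apply_eq_zero_iff _ _).1 hstate

theorem eqOn_of_ode_of_boundary_eq {q1 q2 r a b : ℝ} (hq1 : 0 < q1) (hr : 0 ≤ r)
    (hq2 : 0 ≤ q2) (hab : a < b) {y z : ℝ → ℝ} (hy : ContDiff ℝ 4 y) (hz : ContDiff ℝ 4 z)
    (hyode : ∀ t ∈ Icc a b, r * iteratedDeriv 4 y t - q2 * iteratedDeriv 2 y t + q1 * y t = 0)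
    (hzode : ∀ t ∈ Icc a b, r * iteratedDeriv 4 z t - q2 * iteratedDeriv 2 z t + q1 * z t = 0)
    (ha : z a = y a) (ha' : deriv z a = deriv y a) (hb : z b = y b)
    (hb' : deriv z b = deriv y b) :
    EqOn z y (Icc a b) := by
  have hdiff (t : ℝ) : deriv (fun x => z x - y x) t = deriv z t - deriv y t :=
    deriv_sub (hz.differentiable (by norm_num) t) (hy.differentiable (by norm_num) t)
  have hsub (k : ℕ) (hk : k ≤ 4) (t : ℝ) :
      iteratedDeriv k (fun x => z x - y x) t = iteratedDeriv k z t - iteratedDeriv k y t :=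
    iteratedDeriv_fun_sub (hz.of_le (mod_cast hk)).contDiffAt (hy.of_le (mod_cast hk)).contDiffAt
  refine fun t ht => sub_eq_zero.1 (eqOn_zero_of_ode_of_boundary_eq_zero hq1 hr hq2 hab
    (hz.sub hy) (fun t ht => ?_) (sub_eq_zero.2 ha) ?_ (sub_eq_zero.2 hb) ?_ ht)
  · rw [hsub 4 le_rfl, hsub 2 (by norm_num)]
    linear_combination hzode t ht - hyode t ht
  · rw [hdiff, ha', sub_self]
  · rw [hdiff, hb', sub_self]

end BoundaryValueProblem

/-- for large horizons, unique solvability of the two-point boundary value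
problem for the fourth-order reduced Euler–Lagrange equation of the double integrator
`r·y'''' − q2·y'' + q1·y = 0` on `[0,T]`, with prescribed position and velocity at both
endpoints.  (Uniqueness is uniqueness of the solution on `[0,T]`, where the equation holds.) -/
theorem stmt4 (q1 q2 r : ℝ) (hq1 : 0 < q1) (hr : 0 < r) (hq2 : 0 ≤ q2) :
    ∃ T0 > (0:ℝ), ∀ T ≥ T0, ∀ y0 v0 yT vT : ℝ,
      ∃ y : ℝ → ℝ,
        (ContDiff ℝ 4 y ∧
          (∀ t ∈ Set.Icc (0:ℝ) T,
            r * iteratedDeriv 4 y t - q2 * iteratedDeriv 2 y t + q1 * y t = 0) ∧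
          y 0 = y0 ∧ deriv y 0 = v0 ∧ y T = yT ∧ deriv y T = vT) ∧
        ∀ z : ℝ → ℝ,
          (ContDiff ℝ 4 z ∧
            (∀ t ∈ Set.Icc (0:ℝ) T,
              r * iteratedDeriv 4 z t - q2 * iteratedDeriv 2 z t + q1 * z t = 0) ∧
            z 0 = y0 ∧ deriv z 0 = v0 ∧ z T = yT ∧ deriv z T = vT) →
          Set.EqOn z y (Set.Icc (0:ℝ) T) := by
  refine ⟨1, one_pos, fun T hT y0 v0 yT vT => ?_⟩
  have hT0 : 0 < T := one_pos.trans_le hT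
  obtain ⟨c, hc⟩ := LinearMap.injective_iff_surjective.mp
    (boundaryMap_injective hq1 hr hq2 hT0) ![y0, v0, yT, vT]
  have hy : ContDiff ℝ 4 (companionSolution q1 q2 r c) := contDiff_companionSolution c
  refine ⟨_, ⟨hy, fun t _ => companionSolution_ode hr.ne' c t,
    congrFun hc 0, congrFun hc 1, congrFun hc 2, congrFun hc 3⟩, ?_⟩
  rintro z ⟨hz, hzode, hz0, hz0', hzT, hzT'⟩
  exact eqOn_of_ode_of_boundary_eq hq1 hr.le hq2 hT0 hy hz
    (fun t _ => companionSolution_ode hr.ne' c t) hzode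
    (hz0.trans (congrFun hc 0).symm) (hz0'.trans (congrFun hc 1).symm)
    (hzT.trans (congrFun hc 2).symm) (hzT'.trans (congrFun hc 3).symm)
end

section
/- Let ω > 0 and let a0, b0, aT, bT be real numbers satisfying the admissibility conditions a0 − ω·b0 ≠ 0 and aT + ω·bT ≠ 0. Then there exist T0 > 0 and C > 0 such that for every T ≥ T0 and all real numbers c0, cT, there exists a unique twice differentiable function y : ℝ → ℝ with y''(t) = ω^2·y(t) for all t ∈ ℝ, a0·y(0) + b0·y'(0) = c0 and aT·y(T) + bT·y'(T) = cT; moreover |y(t)| + |y'(t)| ≤ C·(|c0| + |cT|)·( e^{−ω·t} + e^{−ω·(T−t)} ) for all t ∈ [0,T]. -/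
/-!
Every solution of `y'' = ω²y` is a combination `P e^{-ω(T-t)} + q e^{-ωt}` of a layer at `t = T`
and a layer at `t = 0`. In these coordinates the two boundary conditions form a linear system
whose matrix `[[(a0+ωb0)ε, a0-ωb0], [aT+ωbT, (aT-ωbT)ε]]`, with `ε = e^{-ωT}`, tends to an
anti-diagonal matrix with nonzero determinant as `T → ∞` by admissibility. So for large `T` the
system is uniquely solvable with `|P|, |q| ≲ |c0| + |cT|` uniformly in `T`, which is the
two-boundary-layer estimate.
-/

open Real Set Filter Topology

noncomputable def boundaryLayer (ω T P q t : ℝ) : ℝ :=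
  P * exp (-(ω * (T - t))) + q * exp (-(ω * t))

section BoundaryLayer

variable {ω : ℝ}

lemma hasDerivAt_boundaryLayer (ω T P q t : ℝ) :
    HasDerivAt (boundaryLayer ω T P q) (boundaryLayer ω T (ω * P) (-(ω * q)) t) t := by
  have hP := (((hasDerivAt_id t).const_sub T).const_mul ω).neg.exp.const_mul P
  have hq := ((hasDerivAt_id t).const_mul ω).neg.exp.const_mul q
  exact (hP.add hq).congr_deriv (by simp only [boundaryLayer, Pi.neg_apply, id]; ring)

lemma differentiable_boundaryLayer (ω T P q : ℝ) : Differentiable ℝ (boundaryLayer ω T P q) :=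
  fun t => (hasDerivAt_boundaryLayer ω T P q t).differentiableAt

lemma deriv_boundaryLayer (ω T P q : ℝ) :
    deriv (boundaryLayer ω T P q) = boundaryLayer ω T (ω * P) (-(ω * q)) :=
  funext fun t => (hasDerivAt_boundaryLayer ω T P q t).deriv

lemma differentiable_deriv_boundaryLayer (ω T P q : ℝ) :
    Differentiable ℝ (deriv (boundaryLayer ω T P q)) := by
  rw [deriv_boundaryLayer]
  exact differentiable_boundaryLayer _ _ _ _

lemma deriv_deriv_boundaryLayer (ω T P q t : ℝ) :
    deriv (deriv (boundaryLayer ω T P q)) t = ω ^ 2 * boundaryLayer ω T P q t := by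
  simp only [deriv_boundaryLayer, boundaryLayer]
  ring

lemma boundaryLayer_zero (ω T P q : ℝ) :
    boundaryLayer ω T P q 0 = exp (-(ω * T)) * P + q := by
  simp [boundaryLayer, mul_comm]

lemma boundaryLayer_self (ω T P q : ℝ) :
    boundaryLayer ω T P q T = P + exp (-(ω * T)) * q := by
  simp [boundaryLayer, mul_comm]

lemma boundary_boundaryLayer_zero (ω a b T P q : ℝ) :
    a * boundaryLayer ω T P q 0 + b * deriv (boundaryLayer ω T P q) 0
      = (a + ω * b) * exp (-(ω * T)) * P + (a - ω * b) * q := by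
  rw [deriv_boundaryLayer, boundaryLayer_zero, boundaryLayer_zero]
  ring

lemma boundary_boundaryLayer_self (ω a b T P q : ℝ) :
    a * boundaryLayer ω T P q T + b * deriv (boundaryLayer ω T P q) T
      = (a + ω * b) * P + (a - ω * b) * exp (-(ω * T)) * q := by
  rw [deriv_boundaryLayer, boundaryLayer_self, boundaryLayer_self]
  ring

/-- `(y' + c y) e^{-ct}` has derivative `(ω² - c²) y e^{-ct}`. -/
lemma deriv_add_mul_eq_mul_exp {y : ℝ → ℝ} (hy : Differentiable ℝ y)
    (hy' : Differentiable ℝ (deriv y)) (hode : ∀ t, deriv (deriv y) t = ω ^ 2 * y t)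
    {c : ℝ} (hc : c ^ 2 = ω ^ 2) (t : ℝ) :
    deriv y t + c * y t = (deriv y 0 + c * y 0) * exp (c * t) := by
  have hconst : ∀ s, HasDerivAt (fun s => (deriv y s + c * y s) * exp (-(c * s))) 0 s := by
    intro s
    have hy's : HasDerivAt (deriv y) (ω ^ 2 * y s) s := hode s ▸ (hy' s).hasDerivAt
    refine ((hy's.add ((hy s).hasDerivAt.const_mul c)).mul
      ((hasDerivAt_id s).const_mul c).neg.exp).congr_deriv ?_
    rw [← hc]
    simp only [Pi.neg_apply, Pi.add_apply]
    ring
  have h := is_const_of_deriv_eq_zero (fun s => (hconst s).differentiableAt)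
    (fun s => (hconst s).deriv) t 0
  simp only [mul_zero, neg_zero, exp_zero, mul_one] at h
  rw [← h, mul_assoc, ← exp_add, neg_add_cancel, exp_zero, mul_one]

lemma exists_eq_boundaryLayer (hω : ω ≠ 0) {y : ℝ → ℝ} (hy : Differentiable ℝ y)
    (hy' : Differentiable ℝ (deriv y)) (hode : ∀ t, deriv (deriv y) t = ω ^ 2 * y t) (T : ℝ) :
    ∃ P q, y = boundaryLayer ω T P q := by
  refine ⟨(deriv y 0 + ω * y 0) * exp (ω * T) / (2 * ω), (ω * y 0 - deriv y 0) / (2 * ω),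
    funext fun t => ?_⟩
  have hplus := deriv_add_mul_eq_mul_exp hy hy' hode rfl t
  have hminus := deriv_add_mul_eq_mul_exp hy hy' hode (neg_sq ω) t
  have hsplit : exp (ω * t) = exp (ω * T) * exp (-(ω * (T - t))) := by
    rw [← exp_add]; ring_nf
  rw [hsplit] at hplus
  simp only [neg_mul] at hminus
  simp only [boundaryLayer]
  field_simp
  linear_combination hplus - hminus

lemma exists_eq_boundaryLayer_of_boundary_conditions (hω : ω ≠ 0) {y : ℝ → ℝ}
    (hy : Differentiable ℝ y) (hy' : Differentiable ℝ (deriv y))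
    (hode : ∀ t, deriv (deriv y) t = ω ^ 2 * y t) {a0 b0 aT bT c0 cT T : ℝ}
    (hy0 : a0 * y 0 + b0 * deriv y 0 = c0) (hyT : aT * y T + bT * deriv y T = cT) :
    ∃ P q, y = boundaryLayer ω T P q ∧
      (a0 + ω * b0) * exp (-(ω * T)) * P + (a0 - ω * b0) * q = c0 ∧
      (aT + ω * bT) * P + (aT - ω * bT) * exp (-(ω * T)) * q = cT := by
  obtain ⟨P, q, rfl⟩ := exists_eq_boundaryLayer hω hy hy' hode T
  rw [boundary_boundaryLayer_zero] at hy0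
  rw [boundary_boundaryLayer_self] at hyT
  exact ⟨P, q, rfl, hy0, hyT⟩

lemma abs_add_abs_deriv_boundaryLayer_le (hω : 0 ≤ ω) {T P q R : ℝ} (hP : |P| ≤ R)
    (hq : |q| ≤ R) (t : ℝ) :
    |boundaryLayer ω T P q t| + |deriv (boundaryLayer ω T P q) t|
      ≤ (1 + ω) * R * (exp (-(ω * t)) + exp (-(ω * (T - t)))) := by
  set u := exp (-(ω * (T - t)))
  set v := exp (-(ω * t))
  have hu : 0 < u := exp_pos _
  have hv : 0 < v := exp_pos _
  have hsum : |P * u| + |q * v| ≤ R * (v + u) := by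
    rw [abs_mul, abs_mul, abs_of_pos hu, abs_of_pos hv]
    nlinarith
  have hy : |boundaryLayer ω T P q t| ≤ R * (v + u) := (abs_add_le _ _).trans hsum
  have hy' : |deriv (boundaryLayer ω T P q) t| ≤ ω * (R * (v + u)) := by
    rw [deriv_boundaryLayer, boundaryLayer, show ω * P * u + -(ω * q) * v = ω * (P * u - q * v)
      by ring, abs_mul, abs_of_nonneg hω]
    exact mul_le_mul_of_nonneg_left ((abs_sub _ _).trans hsum) hω
  linarith

end BoundaryLayer

section LinearSystem

variable {α β γ δ u v x y : ℝ}

lemma eq_of_linear_system {x' y' : ℝ} (hdet : α * δ - β * γ ≠ 0)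
    (h₁ : α * x + β * y = u) (h₂ : γ * x + δ * y = v)
    (h₁' : α * x' + β * y' = u) (h₂' : γ * x' + δ * y' = v) : x = x' ∧ y = y' :=
  ⟨mul_right_cancel₀ hdet (by linear_combination δ * (h₁ - h₁') - β * (h₂ - h₂')),
    mul_right_cancel₀ hdet (by linear_combination α * (h₂ - h₂') - γ * (h₁ - h₁'))⟩

lemma exists_linear_system (hdet : α * δ - β * γ ≠ 0) (u v : ℝ) :
    ∃ x y, α * x + β * y = u ∧ γ * x + δ * y = v :=
  ⟨(δ * u - β * v) / (α * δ - β * γ), (α * v - γ * u) / (α * δ - β * γ),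
    by rw [mul_div_assoc', mul_div_assoc', ← add_div, div_eq_iff hdet]; ring,
    by rw [mul_div_assoc', mul_div_assoc', ← add_div, div_eq_iff hdet]; ring⟩

lemma abs_le_of_linear_system {d K : ℝ} (hd : 0 < d) (hdet : d ≤ |α * δ - β * γ|)
    (hK : |α| + |β| + |γ| + |δ| ≤ K) (h₁ : α * x + β * y = u) (h₂ : γ * x + δ * y = v) :
    |x| ≤ K * (|u| + |v|) / d ∧ |y| ≤ K * (|u| + |v|) / d := by
  have hx : x * (α * δ - β * γ) = δ * u - β * v := by linear_combination δ * h₁ - β * h₂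
  have hy : y * (α * δ - β * γ) = α * v - γ * u := by linear_combination α * h₂ - γ * h₁
  have hbound (r s : ℝ) (hr : |r| ≤ K) (hs : |s| ≤ K) : |r * u - s * v| ≤ K * (|u| + |v|) :=
    calc |r * u - s * v| ≤ |r| * |u| + |s| * |v| := by
          rw [← abs_mul, ← abs_mul]; exact abs_sub _ _
      _ ≤ K * (|u| + |v|) := by nlinarith [abs_nonneg u, abs_nonneg v]
  have := abs_nonneg α; have := abs_nonneg β; have := abs_nonneg γ; have := abs_nonneg δ
  constructor <;> rw [le_div_iff₀ hd]
  · calc |x| * d ≤ |x| * |α * δ - β * γ| := mul_le_mul_of_nonneg_left hdet (abs_nonneg x)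
      _ = |δ * u - β * v| := by rw [← abs_mul, hx]
      _ ≤ K * (|u| + |v|) := hbound δ β (by linarith) (by linarith)
  · calc |y| * d ≤ |y| * |α * δ - β * γ| := mul_le_mul_of_nonneg_left hdet (abs_nonneg y)
      _ = |γ * u - α * v| := by rw [← abs_mul, hy, abs_sub_comm]
      _ ≤ K * (|u| + |v|) := hbound γ α (by linarith) (by linarith)

end LinearSystem

lemma exists_forall_boundary_system_well_conditioned {ω : ℝ} (hω : 0 < ω) {A A' : ℝ}
    (hA : A * A' ≠ 0) (B B' : ℝ) : ∃ T0 > (0 : ℝ), ∀ T ≥ T0,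
      |A * A'| / 2 ≤ |B * exp (-(ω * T)) * (B' * exp (-(ω * T))) - A * A'| ∧
      |B * exp (-(ω * T))| + |A| + |A'| + |B' * exp (-(ω * T))| ≤ |A| + |B| + |A'| + |B'| := by
  have hε : Tendsto (fun T => exp (-(ω * T))) atTop (𝓝 0) :=
    tendsto_exp_neg_atTop_nhds_zero.comp (tendsto_id.const_mul_atTop hω)
  have hdet := (((hε.const_mul B).mul (hε.const_mul B')).sub_const (A * A')).abs
  simp only [mul_zero, zero_sub, abs_neg] at hdet
  obtain ⟨N, hN⟩ := eventually_atTop.1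
    (hdet.eventually_const_lt (half_lt_self (abs_pos.2 hA)))
  refine ⟨max N 1, by positivity, fun T hT => ⟨(hN T (le_of_max_le_left hT)).le, ?_⟩⟩
  have hε1 : exp (-(ω * T)) ≤ 1 :=
    exp_le_one_iff.2 (neg_nonpos.2 (mul_nonneg hω.le (zero_le_one.trans (le_of_max_le_right hT))))
  rw [abs_mul, abs_mul, abs_of_pos (exp_pos _)]
  nlinarith [abs_nonneg B, abs_nonneg B']

/-- cheap-control exponential turnpike for the double integrator.  Under the
admissibility conditions `a0 − ω·b0 ≠ 0` and `aT + ω·bT ≠ 0`, for all large horizons `T`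
and all boundary data `(c0, cT)`, the mixed two-point boundary value problem for
`y'' = ω²·y` has a unique solution, and it satisfies the two-boundary-layer estimate
`|y(t)| + |y'(t)| ≤ C·(|c0| + |cT|)·(e^{−ωt} + e^{−ω(T−t)})` on `[0,T]`. -/
theorem stmt8 (ω a0 b0 aT bT : ℝ) (hω : 0 < ω)
    (h0 : a0 - ω * b0 ≠ 0) (hT : aT + ω * bT ≠ 0) :
    ∃ T0 > (0:ℝ), ∃ C > (0:ℝ), ∀ T ≥ T0, ∀ c0 cT : ℝ,
      (∃! y : ℝ → ℝ,
        Differentiable ℝ y ∧ Differentiable ℝ (deriv y) ∧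
        (∀ t : ℝ, deriv (deriv y) t = ω ^ 2 * y t) ∧
        a0 * y 0 + b0 * deriv y 0 = c0 ∧
        aT * y T + bT * deriv y T = cT) ∧
      (∀ y : ℝ → ℝ,
        Differentiable ℝ y → Differentiable ℝ (deriv y) →
        (∀ t : ℝ, deriv (deriv y) t = ω ^ 2 * y t) →
        a0 * y 0 + b0 * deriv y 0 = c0 →
        aT * y T + bT * deriv y T = cT →
        ∀ t ∈ Set.Icc (0:ℝ) T,
          |y t| + |deriv y t|
            ≤ C * (|c0| + |cT|) * (Real.exp (-(ω * t)) + Real.exp (-(ω * (T - t))))) := by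
  set A := a0 - ω * b0
  set B := a0 + ω * b0
  set A' := aT + ω * bT
  set B' := aT - ω * bT
  set K := |A| + |B| + |A'| + |B'|
  have hAA : 0 < |A * A'| / 2 := half_pos (abs_pos.2 (mul_ne_zero h0 hT))
  have hK : 0 < K := by linarith [abs_pos.2 h0, abs_nonneg B, abs_nonneg A', abs_nonneg B']
  obtain ⟨T0, hT0, hsys⟩ :=
    exists_forall_boundary_system_well_conditioned hω (mul_ne_zero h0 hT) B B'
  refine ⟨T0, hT0, (1 + ω) * (K / (|A * A'| / 2)), mul_pos (by linarith) (div_pos hK hAA),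
    fun T hT c0 cT => ?_⟩
  obtain ⟨hdet, hcoef⟩ := hsys T hT
  have hD0 := abs_pos.1 (hAA.trans_le hdet)
  obtain ⟨P, q, hP, hq⟩ := exists_linear_system hD0 c0 cT
  refine ⟨⟨boundaryLayer ω T P q, ⟨differentiable_boundaryLayer ω T P q,
    differentiable_deriv_boundaryLayer ω T P q, deriv_deriv_boundaryLayer ω T P q,
    by rw [boundary_boundaryLayer_zero]; exact hP, by rw [boundary_boundaryLayer_self]; exact hq⟩,
    ?_⟩, ?_⟩
  · rintro z ⟨hz, hz', hode, hz0, hzT⟩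
    obtain ⟨P', q', rfl, hP', hq'⟩ :=
      exists_eq_boundaryLayer_of_boundary_conditions hω.ne' hz hz' hode hz0 hzT
    obtain ⟨rfl, rfl⟩ := eq_of_linear_system hD0 hP' hq' hP hq
    rfl
  · intro y hy hy' hode hy0 hyT t _
    obtain ⟨P', q', rfl, hP', hq'⟩ :=
      exists_eq_boundaryLayer_of_boundary_conditions hω.ne' hy hy' hode hy0 hyT
    obtain ⟨hPb, hqb⟩ := abs_le_of_linear_system hAA hdet hcoef hP' hq'
    exact (abs_add_abs_deriv_boundaryLayer_le hω.le hPb hqb t).trans_eq (by ring)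
end

section
/- Let A be a real n×n matrix, B a real n×m matrix, Q a symmetric positive semidefinite real n×n matrix, and R a symmetric positive definite real m×m matrix. Assume the two Hautus-type conditions on the imaginary axis: (i) for every real ω and every x ∈ ℂ^n, if A·x = iω·x and Q·x = 0 then x = 0; (ii) for every real ω and every p ∈ ℂ^n, if Aᵀ·p = iω·p and Bᵀ·p = 0 then p = 0 (matrices acting on complex vectors by coefficient extension). Then the Hamiltonian matrix H, the real (2n)×(2n) block matrix with blocks A and −B·R^{-1}·Bᵀ in the first row and −Q and −Aᵀ in the second row, has no purely imaginary eigenvalue: for every real ω, iω is not an eigenvalue of the complexification of H. -/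
/-!
Let `H (x, p) = iω (x, p)`. Pairing the first block row with `p`, the second with `x`, and
adding the conjugate of the first to the second, the cross terms `p⋆ A x` cancel because `iω` is
purely imaginary, leaving `x⋆ Q x + p⋆ B R⁻¹ Bᵀ p = 0`. Both terms are nonnegative, so `Q x = 0`
and `Bᵀ p = 0`; the block equations then reduce to `A x = iω x` and `Aᵀ p = -iω p`, and the two
Hautus conditions force `x = 0` and `p = 0`.
-/

open Matrix Complex
open scoped ComplexOrder

namespace Matrix

section Hamiltonian

variable {𝕜 n : Type*} [RCLike 𝕜] [Fintype n]

lemma star_dotProduct_conjTranspose_mulVec (M : Matrix n n 𝕜) (x y : n → 𝕜) :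
    star x ⬝ᵥ Mᴴ *ᵥ y = star (star y ⬝ᵥ M *ᵥ x) := by
  rw [star_dotProduct, star_mulVec, conjTranspose_conjTranspose, ← dotProduct_mulVec]

lemma fromBlocks_mulVec_sumElim_eq_smul_iff {m : Type*} [Fintype m] (A : Matrix n n 𝕜)
    (B : Matrix n m 𝕜) (C : Matrix m n 𝕜) (D : Matrix m m 𝕜) (x : n → 𝕜) (p : m → 𝕜) (c : 𝕜) :
    fromBlocks A B C D *ᵥ Sum.elim x p = c • Sum.elim x p ↔
      A *ᵥ x + B *ᵥ p = c • x ∧ C *ᵥ x + D *ᵥ p = c • p := by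
  have hsmul : c • Sum.elim x p = Sum.elim (c • x) (c • p) := by ext (_ | _) <;> rfl
  rw [fromBlocks_mulVec, Sum.elim_comp_inl, Sum.elim_comp_inr, hsmul, Sum.elim_eq_iff]

/-- `N` stands for `B R⁻¹ Bᴴ` of the linear-quadratic problem. -/
def hamiltonianMatrix (A N Q : Matrix n n 𝕜) : Matrix (n ⊕ n) (n ⊕ n) 𝕜 :=
  fromBlocks A (-N) (-Q) (-Aᴴ)

variable {A N Q : Matrix n n 𝕜} {x p : n → 𝕜} {c : 𝕜}

lemma dotProduct_mulVec_add_eq_zero_of_hamiltonian (hN : N.IsHermitian) (hc : star c = -c)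
    (h₁ : A *ᵥ x - N *ᵥ p = c • x) (h₂ : -(Q *ᵥ x) - Aᴴ *ᵥ p = c • p) :
    star x ⬝ᵥ Q *ᵥ x + star p ⬝ᵥ N *ᵥ p = 0 := by
  have e₁ := congrArg (star p ⬝ᵥ ·) h₁
  have e₂ := congrArg (star x ⬝ᵥ ·) h₂
  simp only [dotProduct_sub, dotProduct_neg, dotProduct_smul, smul_eq_mul] at e₁ e₂
  have hN_real : star (star p ⬝ᵥ N *ᵥ p) = star p ⬝ᵥ N *ᵥ p := by
    rw [← star_dotProduct_conjTranspose_mulVec, hN.eq]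
  have e₁' := congrArg star e₁
  rw [star_sub, star_mul', hN_real, ← star_dotProduct_conjTranspose_mulVec A x p,
    ← star_dotProduct x p, hc] at e₁'
  linear_combination -(e₂ + e₁')

lemma PosSemidef.mulVec_eq_zero_of_hamiltonian (hQ : Q.PosSemidef) (hN : N.PosSemidef)
    (hc : star c = -c) (h₁ : A *ᵥ x - N *ᵥ p = c • x) (h₂ : -(Q *ᵥ x) - Aᴴ *ᵥ p = c • p) :
    Q *ᵥ x = 0 ∧ N *ᵥ p = 0 := by
  obtain ⟨hx, hp⟩ := (add_eq_zero_iff_of_nonneg (hQ.dotProduct_mulVec_nonneg x)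
    (hN.dotProduct_mulVec_nonneg p)).mp
    (dotProduct_mulVec_add_eq_zero_of_hamiltonian hN.isHermitian hc h₁ h₂)
  exact ⟨(hQ.dotProduct_mulVec_zero_iff x).mp hx, (hN.dotProduct_mulVec_zero_iff p).mp hp⟩

theorem PosSemidef.eigen_decouple_of_hamiltonianMatrix (hQ : Q.PosSemidef) (hN : N.PosSemidef)
    (hc : star c = -c) (h : hamiltonianMatrix A N Q *ᵥ Sum.elim x p = c • Sum.elim x p) :
    Q *ᵥ x = 0 ∧ N *ᵥ p = 0 ∧ A *ᵥ x = c • x ∧ Aᴴ *ᵥ p = -c • p := by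
  rw [hamiltonianMatrix, fromBlocks_mulVec_sumElim_eq_smul_iff] at h
  simp only [neg_mulVec, ← sub_eq_add_neg] at h
  obtain ⟨hQx, hNp⟩ := hQ.mulVec_eq_zero_of_hamiltonian hN hc h.1 h.2
  refine ⟨hQx, hNp, ?_, ?_⟩
  · simpa [hNp] using h.1
  · rw [neg_smul, ← h.2, hQx]
    simp

lemma PosDef.mul_mul_conjTranspose_mulVec_eq_zero_iff {m : Type*} [Fintype m]
    {R : Matrix m m 𝕜} (hR : R.PosDef) (B : Matrix n m 𝕜) (p : n → 𝕜) :
    (B * R * Bᴴ) *ᵥ p = 0 ↔ Bᴴ *ᵥ p = 0 := by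
  refine ⟨fun h => ?_, fun h => by rw [← mulVec_mulVec, h, mulVec_zero]⟩
  by_contra hne
  have hpos := hR.dotProduct_mulVec_pos hne
  rw [star_mulVec, conjTranspose_conjTranspose, ← dotProduct_mulVec, mulVec_mulVec,
    mulVec_mulVec, h, dotProduct_zero] at hpos
  exact hpos.ne rfl

end Hamiltonian

section Complexification

variable {k l o : Type*}

lemma map_ofReal_mul [Fintype l] (M : Matrix k l ℝ) (N : Matrix l o ℝ) :
    (M * N).map ofReal = M.map ofReal * N.map ofReal :=
  Matrix.map_mul (f := ofRealHom)

lemma map_ofReal_transpose (M : Matrix k l ℝ) : Mᵀ.map ofReal = (M.map ofReal)ᴴ :=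
  conjTranspose_map ofReal fun x => (conj_ofReal x).symm

variable [Fintype k] [DecidableEq k] {S : Matrix k k ℝ}

theorem PosSemidef.map_ofReal (hS : S.PosSemidef) : (S.map ofReal).PosSemidef := by
  open scoped MatrixOrder Matrix.Norms.L2Operator in
  obtain ⟨L, rfl⟩ :=
    CStarAlgebra.nonneg_iff_eq_star_mul_self.mp (nonneg_iff_posSemidef.mpr hS)
  rw [star_eq_conjTranspose, conjTranspose_eq_transpose_of_trivial, map_ofReal_mul,
    map_ofReal_transpose]
  exact posSemidef_conjTranspose_mul_self _

theorem PosDef.map_ofReal (hS : S.PosDef) : (S.map ofReal).PosDef := by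
  refine hS.posSemidef.map_ofReal.posDef_iff_det_ne_zero.mpr ?_
  rw [show (S.map ofReal).det = S.det from (ofRealHom.map_det S).symm]
  exact ofReal_ne_zero.mpr hS.det_pos.ne'

end Complexification

end Matrix

/-- hyperbolicity of the Hamiltonian matrix of the regular LQ problem.
Under the Hautus-type conditions on the imaginary axis — (i) no purely imaginary
eigenvector of `A` is killed by `Q`, (ii) no purely imaginary eigenvector of `Aᵀ` is
killed by `Bᵀ` — the Hamiltonian matrix `H = [[A, −B·R⁻¹·Bᵀ], [−Q, −Aᵀ]]` has no purely
imaginary eigenvalue. -/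
theorem stmt18 (n m : ℕ)
    (A : Matrix (Fin n) (Fin n) ℝ) (B : Matrix (Fin n) (Fin m) ℝ)
    (Q : Matrix (Fin n) (Fin n) ℝ) (hQ : Q.PosSemidef)
    (R : Matrix (Fin m) (Fin m) ℝ) (hR : R.PosDef)
    (hdet : ∀ (ω : ℝ) (x : Fin n → ℂ),
      (A.map Complex.ofReal).mulVec x = (Complex.I * ω) • x →
      (Q.map Complex.ofReal).mulVec x = 0 → x = 0)
    (hcont : ∀ (ω : ℝ) (p : Fin n → ℂ),
      (Aᵀ.map Complex.ofReal).mulVec p = (Complex.I * ω) • p →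
      (Bᵀ.map Complex.ofReal).mulVec p = 0 → p = 0) :
    ∀ ω : ℝ,
      ¬ ∃ v : (Fin n ⊕ Fin n) → ℂ, v ≠ 0 ∧
        ((Matrix.fromBlocks A (-(B * R⁻¹ * Bᵀ)) (-Q) (-Aᵀ)).map Complex.ofReal).mulVec v
          = (Complex.I * ω) • v := by
  rintro ω ⟨v, hv0, hv⟩
  have hH : (fromBlocks A (-(B * R⁻¹ * Bᵀ)) (-Q) (-Aᵀ)).map ofReal =
      hamiltonianMatrix (A.map ofReal) (B.map ofReal * R⁻¹.map ofReal * (B.map ofReal)ᴴ)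
        (Q.map ofReal) := by
    simp only [hamiltonianMatrix, fromBlocks_map, Matrix.map_neg _ ofReal_neg, map_ofReal_mul,
      map_ofReal_transpose]
  rw [hH, ← Sum.elim_comp_inl_inr v] at hv
  obtain ⟨hQx, hNp, hAx, hAp⟩ := hQ.map_ofReal.eigen_decouple_of_hamiltonianMatrix
    (hR.inv.map_ofReal.posSemidef.mul_mul_conjTranspose_same _) (by simp) hv
  have hBp := (hR.inv.map_ofReal.mul_mul_conjTranspose_mulVec_eq_zero_iff _ _).mp hNp
  have hp : v ∘ Sum.inr = 0 := hcont (-ω) _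
    (by rw [map_ofReal_transpose, hAp]; push_cast; ring_nf) (by rwa [map_ofReal_transpose])
  have hx : v ∘ Sum.inl = 0 := hdet ω _ hAx hQx
  exact hv0 (by rw [← Sum.elim_comp_inl_inr v, hx, hp]; ext (_ | _) <;> rfl)
end
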